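/- Let T > 0, M ≥ 0, and let u : ℝ × [0,T) → ℝ be a classical periodic solution of the Fornberg–Whitham equation such that, in addition, ∂_x² u, ∂_x³ u and ∂_t ∂_x² u exist and are continuous on ℝ × [0,T). Let u₀(x) = u(x,0). If ∂_x u(x,t) ≥ -M for all x ∈ ℝ and t ∈ [0,T), then for every t ∈ [0,T), ∫_0^1 (∂_x² u(x,t))² dx ≤ e^{(2 + 15M/2) t} ∫_0^1 u₀''(x)² dx. -/

import Mathlib

/-!
Let `E(t) = ∫₀¹ (∂ₓ²u)² dx`. Since `∂ₜ∂ₓ²u = ∂ₓ²(K * ∂ₓu - (3/2) u ∂ₓu)`, every term of `E'`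
integrates to zero by periodicity except `-(15/2) ∫₀¹ ∂ₓu (∂ₓ²u)²`: the nonlocal term drops out
because `v = K * g` solves `v - v'' = g`, and `∫₀¹ u ∂ₓ²u ∂ₓ³u = -(1/2) ∫₀¹ ∂ₓu (∂ₓ²u)²`.
Hence `E' ≤ (15M/2) E`, and Grönwall gives the bound. Interchanging `∂ₜ` and `∂ₓ²` is justified
by differentiating `u(x,t) - u(x,0) = ∫₀ᵗ ∂ₜu` twice in `x` under the integral sign.
-/

open MeasureTheory

/-- The 1-periodic convolution kernel of `(id - ∂ₓ²)⁻¹` on the circle, on `[0,1)`. -/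
noncomputable def FWKernel (y : ℝ) : ℝ :=
  (Real.exp y + Real.exp (1 - y)) / (2 * (Real.exp 1 - 1))

/-- A classical periodic solution of the Fornberg–Whitham equation on `ℝ × [0,T)`:
`u` is 1-periodic in `x`, has continuous partial derivatives `ux = ∂ₓ u` and
`ut = ∂ₜ u` on `ℝ × [0,T)`, and satisfies
`∂ₜ u + (3/2) u ∂ₓ u = ∫_0^1 K(y) ∂ₓ u(x - y, t) dy`. -/
def IsClassicalFWSolution (T : ℝ) (u ux ut : ℝ → ℝ → ℝ) : Prop :=
  ContinuousOn (fun p : ℝ × ℝ => u p.1 p.2) (Set.univ ×ˢ Set.Ico 0 T) ∧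
  (∀ x : ℝ, ∀ t ∈ Set.Ico (0 : ℝ) T, u (x + 1) t = u x t) ∧
  (∀ x : ℝ, ∀ t ∈ Set.Ico (0 : ℝ) T, HasDerivAt (fun x' => u x' t) (ux x t) x) ∧
  (∀ x : ℝ, ∀ t ∈ Set.Ico (0 : ℝ) T,
    HasDerivWithinAt (fun t' => u x t') (ut x t) (Set.Ico 0 T) t) ∧
  ContinuousOn (fun p : ℝ × ℝ => ux p.1 p.2) (Set.univ ×ˢ Set.Ico 0 T) ∧
  ContinuousOn (fun p : ℝ × ℝ => ut p.1 p.2) (Set.univ ×ˢ Set.Ico 0 T) ∧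
  (∀ x : ℝ, ∀ t ∈ Set.Ico (0 : ℝ) T,
    ut x t + (3 / 2) * u x t * ux x t = ∫ y in (0:ℝ)..1, FWKernel y * ux (x - y) t)

open Set Function

lemma Function.Periodic.of_hasDerivAt {f f' : ℝ → ℝ} {c : ℝ} (hf : Periodic f c)
    (hd : ∀ x, HasDerivAt f (f' x) x) : Periodic f' c := fun x =>
  ((hd (x + c)).comp_add_const x c).unique (by rw [hf.funext]; exact hd x)

lemma continuous_of_forall_hasDerivAt {f f' : ℝ → ℝ} (h : ∀ x, HasDerivAt f (f' x) x) :
    Continuous f :=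
  continuous_iff_continuousAt.2 fun x => (h x).continuousAt

lemma integral_deriv_eq_zero_of_periodic {f f' : ℝ → ℝ} {c : ℝ} (hf : Periodic f c)
    (hd : ∀ x, HasDerivAt f (f' x) x) (hc : Continuous f') :
    ∫ x in (0:ℝ)..c, f' x = 0 := by
  rw [intervalIntegral.integral_eq_sub_of_hasDerivAt (fun x _ => hd x) (hc.intervalIntegrable _ _),
    ← zero_add c, hf 0, sub_self]

lemma continuousOn_intervalIntegral_of_continuousOn {X : Type*} [TopologicalSpace X]
    {F : X → ℝ → ℝ} {S : Set X} {a b : ℝ} (hab : a ≤ b)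
    (hF : ContinuousOn (fun p : X × ℝ => F p.1 p.2) (S ×ˢ Icc a b)) :
    ContinuousOn (fun x => ∫ τ in a..b, F x τ) S := by
  rw [continuousOn_iff_continuous_domRestrict]
  have hclamp : Continuous (uncurry fun (x : S) τ => F x (projIcc a b hab τ)) :=
    hF.comp_continuous (f := fun p : S × ℝ => ((p.1 : X), (projIcc a b hab p.2 : ℝ)))
      (by fun_prop) fun p => ⟨p.1.2, (projIcc a b hab p.2).2⟩
  refine (intervalIntegral.continuous_parametric_intervalIntegral_of_continuous'
    hclamp a b).congr fun x => intervalIntegral.integral_congr fun τ hτ => ?_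
  rw [uIcc_of_le hab] at hτ
  simp [projIcc_of_mem hab hτ]

lemma hasDerivAt_intervalIntegral_of_continuousOn {F F' : ℝ → ℝ → ℝ} {U : Set ℝ}
    {a b x₀ : ℝ} (hU : IsOpen U) (hx₀ : x₀ ∈ U)
    (hF : ∀ x ∈ U, ∀ τ ∈ uIcc a b, HasDerivAt (F · τ) (F' x τ) x)
    (hFc : ∀ x ∈ U, ContinuousOn (F x) (uIcc a b))
    (hF'c : ContinuousOn (fun p : ℝ × ℝ => F' p.1 p.2) (U ×ˢ uIcc a b)) :
    HasDerivAt (fun x => ∫ τ in a..b, F x τ) (∫ τ in a..b, F' x₀ τ) x₀ := by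
  obtain ⟨r, hr, hrU⟩ := Metric.nhds_basis_closedBall.mem_iff.1 (hU.mem_nhds hx₀)
  obtain ⟨C, hC⟩ := ((isCompact_closedBall x₀ r).prod isCompact_uIcc).exists_bound_of_continuousOn
    (hF'c.mono (prod_mono hrU subset_rfl))
  have hF'x₀ : ContinuousOn (F' x₀) (uIcc a b) :=
    hF'c.comp (Continuous.prodMk_right x₀).continuousOn fun τ hτ => ⟨hx₀, hτ⟩
  refine (intervalIntegral.hasDerivAt_integral_of_dominated_loc_of_deriv_le (bound := fun _ => C)
    (Metric.ball_mem_nhds x₀ hr) ?_ ((hFc x₀ hx₀).intervalIntegrable)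
    ((hF'x₀.mono uIoc_subset_uIcc).aestronglyMeasurable measurableSet_uIoc) ?_
    intervalIntegrable_const ?_).2
  · filter_upwards [hU.mem_nhds hx₀] with x hx
    exact ((hFc x hx).mono uIoc_subset_uIcc).aestronglyMeasurable measurableSet_uIoc
  · exact .of_forall fun τ hτ x hx =>
      hC (x, τ) ⟨Metric.ball_subset_closedBall hx, uIoc_subset_uIcc hτ⟩
  · exact .of_forall fun τ hτ x hx =>
      hF x (hrU (Metric.ball_subset_closedBall hx)) τ (uIoc_subset_uIcc hτ)

lemma le_exp_mul_sub_of_hasDerivAt_le {f f' : ℝ → ℝ} {a b K : ℝ}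
    (hc : ContinuousOn f (Ico a b)) (hd : ∀ s ∈ Ioo a b, HasDerivAt f (f' s) s)
    (hle : ∀ s ∈ Ioo a b, f' s ≤ K * f s) {t : ℝ} (ht : t ∈ Ico a b) :
    f t ≤ Real.exp (K * (t - a)) * f a := by
  have hanti : AntitoneOn (fun s => Real.exp (-(K * s)) * f s) (Ico a b) := by
    refine antitoneOn_of_hasDerivWithinAt_nonpos (convex_Ico a b) (by fun_prop)
      (f' := fun s => Real.exp (-(K * s)) * (f' s - K * f s)) (fun s hs => ?_) (fun s hs => ?_)
    · rw [interior_Ico] at hs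
      have := (((hasDerivAt_id s).const_mul K).neg.exp).mul (hd s hs)
      exact (this.congr_deriv (by simp; ring)).hasDerivWithinAt
    · rw [interior_Ico] at hs
      exact mul_nonpos_of_nonneg_of_nonpos (Real.exp_pos _).le (sub_nonpos.2 (hle s hs))
  have h := hanti ⟨le_rfl, ht.1.trans_lt ht.2⟩ ht ht.1
  calc f t = Real.exp (K * t) * (Real.exp (-(K * t)) * f t) := by
        rw [← mul_assoc, ← Real.exp_add, add_neg_cancel, Real.exp_zero, one_mul]
    _ ≤ Real.exp (K * t) * (Real.exp (-(K * a)) * f a) := by gcongr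
    _ = Real.exp (K * (t - a)) * f a := by rw [mul_sub, sub_eq_add_neg, Real.exp_add]; ring

section JointContinuity

variable {f : ℝ → ℝ → ℝ} {S : Set ℝ}

lemma continuous_left_of_continuousOn_univ_prod
    (hf : ContinuousOn (fun p : ℝ × ℝ => f p.1 p.2) (univ ×ˢ S)) {s : ℝ} (hs : s ∈ S) :
    Continuous (f · s) :=
  hf.comp_continuous (Continuous.prodMk_left s) fun _ => ⟨trivial, hs⟩

lemma continuousOn_right_of_continuousOn_univ_prod
    (hf : ContinuousOn (fun p : ℝ × ℝ => f p.1 p.2) (univ ×ˢ S)) (x : ℝ) :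
    ContinuousOn (f x) S :=
  hf.comp (Continuous.prodMk_right x).continuousOn fun _ hs => ⟨trivial, hs⟩

lemma continuousOn_swap_of_continuousOn_univ_prod
    (hf : ContinuousOn (fun p : ℝ × ℝ => f p.1 p.2) (univ ×ˢ S)) {S' : Set ℝ} (hS' : S' ⊆ S)
    (I : Set ℝ) : ContinuousOn (fun p : ℝ × ℝ => f p.2 p.1) (S' ×ˢ I) :=
  hf.comp continuous_swap.continuousOn fun _ hp => ⟨trivial, hS' hp.1⟩

end JointContinuity

lemma hasDerivAt_mixed_partial {v vx vt vtx : ℝ → ℝ → ℝ} {a b : ℝ}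
    (hvx : ∀ x, ∀ t ∈ Ico a b, HasDerivAt (v · t) (vx x t) x)
    (hvt : ∀ x, ∀ t ∈ Ioo a b, HasDerivAt (v x) (vt x t) t)
    (hvc : ∀ x, ContinuousOn (v x) (Ico a b))
    (hvtx : ∀ x, ∀ t ∈ Ico a b, HasDerivAt (vt · t) (vtx x t) x)
    (hvtc : ContinuousOn (fun p : ℝ × ℝ => vt p.1 p.2) (univ ×ˢ Ico a b))
    (hvtxc : ContinuousOn (fun p : ℝ × ℝ => vtx p.1 p.2) (univ ×ˢ Ico a b))
    (x : ℝ) {t : ℝ} (ht : t ∈ Ioo a b) : HasDerivAt (vx x) (vtx x t) t := by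
  have hsub : ∀ s ∈ Ico a b, uIcc a s ⊆ Ico a b := fun s hs => by
    rw [uIcc_of_le hs.1]; exact Icc_subset_Ico_right hs.2
  have hvtx_t := continuousOn_right_of_continuousOn_univ_prod hvtxc x
  have hFTC : ∀ s ∈ Ico a b, (fun y => v y s - v y a) = fun y => ∫ τ in a..s, vt y τ :=
    fun s hs => funext fun y => (intervalIntegral.integral_eq_sub_of_hasDerivAt_of_le hs.1
      ((hvc y).mono (Icc_subset_Ico_right hs.2)) (fun τ hτ => hvt y τ ⟨hτ.1, hτ.2.trans hs.2⟩)
      (((continuousOn_right_of_continuousOn_univ_prod hvtc y).mono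
        (hsub s hs)).intervalIntegrable)).symm
  have hrep : ∀ s ∈ Ico a b, vx x s = vx x a + ∫ τ in a..s, vtx x τ := fun s hs => by
    have hdiff := (hvx x s hs).fun_sub (hvx x a ⟨le_rfl, hs.1.trans_lt hs.2⟩)
    rw [hFTC s hs] at hdiff
    have hint := hasDerivAt_intervalIntegral_of_continuousOn isOpen_univ (mem_univ x)
      (fun y _ τ hτ => hvtx y τ (hsub s hs hτ))
      (fun y _ => (continuousOn_right_of_continuousOn_univ_prod hvtc y).mono (hsub s hs))
      (hvtxc.mono (prod_mono subset_rfl (hsub s hs)))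
    linarith [hdiff.unique hint]
  have hprim : HasDerivAt (fun s => ∫ τ in a..s, vtx x τ) (vtx x t) t :=
    intervalIntegral.integral_hasDerivAt_right
      ((hvtx_t.mono (hsub t (Ioo_subset_Ico_self ht))).intervalIntegrable)
      ((hvtx_t.mono Ioo_subset_Ico_self).stronglyMeasurableAtFilter isOpen_Ioo t ht)
      ((hvtx_t t (Ioo_subset_Ico_self ht)).continuousAt (Ico_mem_nhds ht.1 ht.2))
  refine (hprim.const_add (vx x a)).congr_of_eventuallyEq ?_
  filter_upwards [Ioo_mem_nhds ht.1 ht.2] with s hs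
  exact hrep s (Ioo_subset_Ico_self hs)

lemma integral_mul_comp_sub_of_hasDerivAt {k k' g g' : ℝ → ℝ}
    (hk : ∀ y, HasDerivAt k (k' y) y) (hg : ∀ z, HasDerivAt g (g' z) z)
    (hk' : Continuous k') (hg' : Continuous g') (x : ℝ) :
    ∫ y in (0:ℝ)..1, k y * g' (x - y) =
      k 0 * g x - k 1 * g (x - 1) + ∫ y in (0:ℝ)..1, k' y * g (x - y) := by
  have hv : ∀ y, HasDerivAt (fun y => -g (x - y)) (g' (x - y)) y := fun y => by
    simpa using ((hg (x - y)).comp_const_sub x y).fun_neg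
  rw [intervalIntegral.integral_mul_deriv_eq_deriv_mul (fun y _ => hk y) (fun y _ => hv y)
    (hk'.intervalIntegrable _ _) ((hg'.comp (by fun_prop)).intervalIntegrable _ _)]
  simp only [sub_zero, mul_neg, intervalIntegral.integral_neg]
  ring

noncomputable def fwKernelDeriv (y : ℝ) : ℝ :=
  (Real.exp y - Real.exp (1 - y)) / (2 * (Real.exp 1 - 1))

lemma hasDerivAt_FWKernel (y : ℝ) : HasDerivAt FWKernel (fwKernelDeriv y) y := by
  have h := ((Real.hasDerivAt_exp y).add
    ((Real.hasDerivAt_exp (1 - y)).comp y ((hasDerivAt_id y).const_sub 1))).div_const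
    (2 * (Real.exp 1 - 1))
  exact h.congr_deriv (by simp [fwKernelDeriv, sub_eq_add_neg])

lemma hasDerivAt_fwKernelDeriv (y : ℝ) : HasDerivAt fwKernelDeriv (FWKernel y) y := by
  have h := ((Real.hasDerivAt_exp y).sub
    ((Real.hasDerivAt_exp (1 - y)).comp y ((hasDerivAt_id y).const_sub 1))).div_const
    (2 * (Real.exp 1 - 1))
  exact h.congr_deriv (by simp [FWKernel])

@[fun_prop]
lemma continuous_FWKernel : Continuous FWKernel := by
  unfold FWKernel; fun_prop

lemma continuous_fwKernelDeriv : Continuous fwKernelDeriv := by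
  unfold fwKernelDeriv; fun_prop

lemma FWKernel_one : FWKernel 1 = FWKernel 0 := by
  simp [FWKernel, add_comm]

lemma fwKernelDeriv_one_sub_zero : fwKernelDeriv 1 - fwKernelDeriv 0 = 1 := by
  have h : 2 * (Real.exp 1 - 1) ≠ 0 := by
    have := Real.one_lt_exp_iff.2 one_pos
    positivity
  rw [fwKernelDeriv, fwKernelDeriv, div_sub_div_same, div_eq_one_iff_eq h]
  simp only [sub_self, sub_zero, Real.exp_zero]
  ring

noncomputable def fwConv (f : ℝ → ℝ) (x : ℝ) : ℝ :=
  ∫ y in (0:ℝ)..1, FWKernel y * f (x - y)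

lemma Function.Periodic.fwConv {f : ℝ → ℝ} (hf : Periodic f 1) : Periodic (fwConv f) 1 :=
  fun x => intervalIntegral.integral_congr fun y _ => by
    simp only [add_sub_right_comm x 1 y, hf (x - y)]

lemma hasDerivAt_fwConv {f f' : ℝ → ℝ} (hf : ∀ x, HasDerivAt f (f' x) x) (hf' : Continuous f')
    (x : ℝ) : HasDerivAt (fwConv f) (fwConv f' x) x :=
  hasDerivAt_intervalIntegral_of_continuousOn isOpen_univ (mem_univ x)
    (fun x _ y _ => ((hf (x - y)).comp_sub_const x y).const_mul (FWKernel y))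
    (fun x _ => (continuous_FWKernel.mul
      ((continuous_of_forall_hasDerivAt hf).comp (continuous_sub_left x))).continuousOn)
    (by fun_prop)

lemma continuousOn_fwConv {f : ℝ → ℝ → ℝ} {S : Set ℝ}
    (hf : ContinuousOn (fun p : ℝ × ℝ => f p.1 p.2) (univ ×ˢ S)) :
    ContinuousOn (fun p : ℝ × ℝ => fwConv (f · p.2) p.1) (univ ×ˢ S) :=
  continuousOn_intervalIntegral_of_continuousOn zero_le_one
    (F := fun (p : ℝ × ℝ) y => FWKernel y * f (p.1 - y) p.2)
    ((continuous_FWKernel.comp continuous_snd).continuousOn.mul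
      (hf.comp (f := fun q : (ℝ × ℝ) × ℝ => (q.1.1 - q.2, q.1.2)) (by fun_prop)
        fun q hq => ⟨trivial, hq.1.2⟩))

lemma fwConv_of_hasDerivAt_two {f f₁ f₂ : ℝ → ℝ} (hf : Periodic f 1)
    (h₁ : ∀ x, HasDerivAt f (f₁ x) x) (h₂ : ∀ x, HasDerivAt f₁ (f₂ x) x) (hc : Continuous f₂)
    (x : ℝ) : fwConv f₂ x = fwConv f x - f x := by
  have hc₁ := continuous_of_forall_hasDerivAt h₂
  rw [fwConv, integral_mul_comp_sub_of_hasDerivAt hasDerivAt_FWKernel h₂ continuous_fwKernelDeriv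
    hc, integral_mul_comp_sub_of_hasDerivAt hasDerivAt_fwKernelDeriv h₁ continuous_FWKernel hc₁,
    (hf.of_hasDerivAt h₁).sub_eq, hf.sub_eq, FWKernel_one, fwConv]
  linear_combination (-f x) * fwKernelDeriv_one_sub_zero

lemma integral_deriv_mul_fwConv_eq_zero {g g₁ g₂ : ℝ → ℝ} (hg : Periodic g 1)
    (h₁ : ∀ x, HasDerivAt g (g₁ x) x) (h₂ : ∀ x, HasDerivAt g₁ (g₂ x) x) (hc : Continuous g₂) :
    ∫ x in (0:ℝ)..1, g₁ x * fwConv g x = 0 := by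
  have hg₁ := hg.of_hasDerivAt h₁
  have hv : ∀ x, HasDerivAt (fwConv g) (fwConv g₁ x) x :=
    hasDerivAt_fwConv h₁ (continuous_of_forall_hasDerivAt h₂)
  have hv' : ∀ x, HasDerivAt (fwConv g₁) (fwConv g x - g x) x := fun x =>
    (hasDerivAt_fwConv h₂ hc x).congr_deriv (fwConv_of_hasDerivAt_two hg h₁ h₂ hc x)
  -- `v = fwConv g` solves `v - v'' = g`, so `g' v` is the derivative of `g v - v² / 2 + v'² / 2`
  refine integral_deriv_eq_zero_of_periodic
    (f := fun x => g x * fwConv g x - fwConv g x ^ 2 / 2 + fwConv g₁ x ^ 2 / 2)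
    (fun x => by simp only [hg x, hg.fwConv x, hg₁.fwConv x])
    (fun x => ((((h₁ x).mul (hv x)).sub (((hv x).pow 2).div_const 2)).add
      (((hv' x).pow 2).div_const 2)).congr_deriv (by push_cast; ring))
    ((continuous_of_forall_hasDerivAt h₂).mul (continuous_of_forall_hasDerivAt hv))

/-- `∂ₓ²(K * f' - (3/2) f f')`, when `f₁, f₂, f₃` are the first three derivatives of `f`. -/
noncomputable def fwRhsDerivTwo (f f₁ f₂ f₃ : ℝ → ℝ) (x : ℝ) : ℝ :=
  fwConv f₃ x - 3 / 2 * (3 * f₁ x * f₂ x + f x * f₃ x)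

lemma integral_deriv_two_mul_fwRhsDerivTwo {f f₁ f₂ f₃ : ℝ → ℝ} (hf : Periodic f 1)
    (h₁ : ∀ x, HasDerivAt f (f₁ x) x) (h₂ : ∀ x, HasDerivAt f₁ (f₂ x) x)
    (h₃ : ∀ x, HasDerivAt f₂ (f₃ x) x) (hc : Continuous f₃) :
    ∫ x in (0:ℝ)..1, 2 * f₂ x * fwRhsDerivTwo f f₁ f₂ f₃ x =
      -(15 / 2) * ∫ x in (0:ℝ)..1, f₁ x * f₂ x ^ 2 := by
  have hf₁ := hf.of_hasDerivAt h₁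
  have hf₂ := hf₁.of_hasDerivAt h₂
  have c₀ := continuous_of_forall_hasDerivAt h₁
  have c₁ := continuous_of_forall_hasDerivAt h₂
  have c₂ := continuous_of_forall_hasDerivAt h₃
  have cv := continuous_of_forall_hasDerivAt (hasDerivAt_fwConv h₂ c₂)
  have hker := integral_deriv_mul_fwConv_eq_zero hf₁ h₂ h₃ hc
  have hloc : ∫ x in (0:ℝ)..1,
      (2 * f₁ x * f₂ x + 3 / 2 * (f₁ x * f₂ x ^ 2 + 2 * f x * f₂ x * f₃ x)) = 0 :=
    integral_deriv_eq_zero_of_periodic (f := fun x => f₁ x ^ 2 + 3 / 2 * (f x * f₂ x ^ 2))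
      (fun x => by simp only [hf x, hf₁ x, hf₂ x])
      (fun x => (((h₂ x).fun_pow 2).add
        (((h₁ x).fun_mul ((h₃ x).fun_pow 2)).const_mul (3 / 2))).congr_deriv (by push_cast; ring))
      (by fun_prop)
  calc _ = ∫ x in (0:ℝ)..1, (2 * (f₂ x * fwConv f₁ x)
          - (2 * f₁ x * f₂ x + 3 / 2 * (f₁ x * f₂ x ^ 2 + 2 * f x * f₂ x * f₃ x))
          - 15 / 2 * (f₁ x * f₂ x ^ 2)) :=
        intervalIntegral.integral_congr fun x _ => by
          rw [fwRhsDerivTwo, fwConv_of_hasDerivAt_two hf₁ h₂ h₃ hc]; ring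
    _ = _ := by
      rw [intervalIntegral.integral_sub, intervalIntegral.integral_sub,
        intervalIntegral.integral_const_mul, intervalIntegral.integral_const_mul, hker, hloc]
      · ring
      all_goals exact Continuous.intervalIntegrable (by fun_prop) _ _

lemma integral_deriv_two_mul_fwRhsDerivTwo_le {f f₁ f₂ f₃ : ℝ → ℝ} {M : ℝ} (hf : Periodic f 1)
    (h₁ : ∀ x, HasDerivAt f (f₁ x) x) (h₂ : ∀ x, HasDerivAt f₁ (f₂ x) x)
    (h₃ : ∀ x, HasDerivAt f₂ (f₃ x) x) (hc : Continuous f₃) (hlower : ∀ x, -M ≤ f₁ x) :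
    ∫ x in (0:ℝ)..1, 2 * f₂ x * fwRhsDerivTwo f f₁ f₂ f₃ x ≤
      15 * M / 2 * ∫ x in (0:ℝ)..1, f₂ x ^ 2 := by
  have c₁ := continuous_of_forall_hasDerivAt h₂
  have c₂ := continuous_of_forall_hasDerivAt h₃
  rw [integral_deriv_two_mul_fwRhsDerivTwo hf h₁ h₂ h₃ hc, ← intervalIntegral.integral_const_mul,
    ← intervalIntegral.integral_const_mul]
  refine intervalIntegral.integral_mono_on zero_le_one (Continuous.intervalIntegrable
    (by fun_prop) _ _) (Continuous.intervalIntegrable (by fun_prop) _ _) fun x _ => ?_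
  nlinarith [mul_le_mul_of_nonneg_right (hlower x) (sq_nonneg (f₂ x))]

section FornbergWhitham

variable {T : ℝ} {u ux ut uxx uxxx : ℝ → ℝ → ℝ}

lemma continuousOn_fwRhsDerivTwo
    (huc : ContinuousOn (fun p : ℝ × ℝ => u p.1 p.2) (univ ×ˢ Ico 0 T))
    (huxc : ContinuousOn (fun p : ℝ × ℝ => ux p.1 p.2) (univ ×ˢ Ico 0 T))
    (huxxc : ContinuousOn (fun p : ℝ × ℝ => uxx p.1 p.2) (univ ×ˢ Ico 0 T))
    (huxxxc : ContinuousOn (fun p : ℝ × ℝ => uxxx p.1 p.2) (univ ×ˢ Ico 0 T)) :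
    ContinuousOn (fun p : ℝ × ℝ =>
      fwRhsDerivTwo (u · p.2) (ux · p.2) (uxx · p.2) (uxxx · p.2) p.1) (univ ×ˢ Ico 0 T) :=
  (continuousOn_fwConv huxxxc).sub
    (continuousOn_const.mul (((continuousOn_const.mul huxc).mul huxxc).add (huc.mul huxxxc)))

lemma IsClassicalFWSolution.hasDerivAt_uxx (hu : IsClassicalFWSolution T u ux ut)
    (huxx : ∀ x : ℝ, ∀ t ∈ Ico (0 : ℝ) T, HasDerivAt (fun x' => ux x' t) (uxx x t) x)
    (huxxx : ∀ x : ℝ, ∀ t ∈ Ico (0 : ℝ) T, HasDerivAt (fun x' => uxx x' t) (uxxx x t) x)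
    (huxxc : ContinuousOn (fun p : ℝ × ℝ => uxx p.1 p.2) (univ ×ˢ Ico 0 T))
    (huxxxc : ContinuousOn (fun p : ℝ × ℝ => uxxx p.1 p.2) (univ ×ˢ Ico 0 T))
    (x : ℝ) {t : ℝ} (ht : t ∈ Ioo 0 T) :
    HasDerivAt (uxx x) (fwRhsDerivTwo (u · t) (ux · t) (uxx · t) (uxxx · t) x) t := by
  obtain ⟨huc, -, hux, hut, huxc, hutc, hpde⟩ := hu
  have hut_x : ∀ y, ∀ s ∈ Ico 0 T, HasDerivAt (ut · s)
      (fwConv (uxx · s) y - 3 / 2 * (ux y s * ux y s + u y s * uxx y s)) y := fun y s hs => by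
    have hut_eq : (ut · s) = fun y => fwConv (ux · s) y - 3 / 2 * (u y s * ux y s) :=
      funext fun y => by simp only [fwConv]; linarith [hpde y s hs]
    rw [hut_eq]
    exact (hasDerivAt_fwConv (huxx · s hs) (continuous_left_of_continuousOn_univ_prod huxxc hs)
      y).sub (((hux y s hs).mul (huxx y s hs)).const_mul _)
  have hgg_x : ∀ y, ∀ s ∈ Ico 0 T, HasDerivAt
      (fun y => fwConv (uxx · s) y - 3 / 2 * (ux y s * ux y s + u y s * uxx y s))
      (fwRhsDerivTwo (u · s) (ux · s) (uxx · s) (uxxx · s) y) y := fun y s hs =>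
    ((hasDerivAt_fwConv (huxxx · s hs) (continuous_left_of_continuousOn_univ_prod huxxxc hs)
      y).sub ((((huxx y s hs).mul (huxx y s hs)).add ((hux y s hs).mul (huxxx y s hs))).const_mul
        _)).congr_deriv (by simp only [fwRhsDerivTwo]; ring)
  have hggc : ContinuousOn (fun p : ℝ × ℝ => fwConv (uxx · p.2) p.1 -
      3 / 2 * (ux p.1 p.2 * ux p.1 p.2 + u p.1 p.2 * uxx p.1 p.2)) (univ ×ˢ Ico 0 T) :=
    (continuousOn_fwConv huxxc).sub (continuousOn_const.mul ((huxc.mul huxc).add (huc.mul huxxc)))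
  have hux_t := hasDerivAt_mixed_partial hux
    (fun y s hs => (hut y s (Ioo_subset_Ico_self hs)).hasDerivAt (Ico_mem_nhds hs.1 hs.2))
    (continuousOn_right_of_continuousOn_univ_prod huc) hut_x hutc hggc
  exact hasDerivAt_mixed_partial huxx hux_t (continuousOn_right_of_continuousOn_univ_prod huxc)
    hgg_x hggc (continuousOn_fwRhsDerivTwo huc huxc huxxc huxxxc) x ht

lemma IsClassicalFWSolution.hasDerivAt_integral_uxx_sq (hu : IsClassicalFWSolution T u ux ut)
    (huxx : ∀ x : ℝ, ∀ t ∈ Ico (0 : ℝ) T, HasDerivAt (fun x' => ux x' t) (uxx x t) x)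
    (huxxx : ∀ x : ℝ, ∀ t ∈ Ico (0 : ℝ) T, HasDerivAt (fun x' => uxx x' t) (uxxx x t) x)
    (huxxc : ContinuousOn (fun p : ℝ × ℝ => uxx p.1 p.2) (univ ×ˢ Ico 0 T))
    (huxxxc : ContinuousOn (fun p : ℝ × ℝ => uxxx p.1 p.2) (univ ×ˢ Ico 0 T))
    {t : ℝ} (ht : t ∈ Ioo 0 T) :
    HasDerivAt (fun s => ∫ x in (0:ℝ)..1, uxx x s ^ 2)
      (∫ x in (0:ℝ)..1, 2 * uxx x t * fwRhsDerivTwo (u · t) (ux · t) (uxx · t) (uxxx · t) x) t := by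
  have ⟨huc, _, _, _, huxc, _⟩ := hu
  exact hasDerivAt_intervalIntegral_of_continuousOn isOpen_Ioo ht
    (F' := fun s x => 2 * uxx x s * fwRhsDerivTwo (u · s) (ux · s) (uxx · s) (uxxx · s) x)
    (fun s hs x _ => ((hu.hasDerivAt_uxx huxx huxxx huxxc huxxxc x hs).pow 2).congr_deriv
      (by ring))
    (fun s hs => ((continuous_left_of_continuousOn_univ_prod huxxc
      (Ioo_subset_Ico_self hs)).pow 2).continuousOn)
    (continuousOn_swap_of_continuousOn_univ_prod (f := fun x s => 2 * uxx x s *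
      fwRhsDerivTwo (u · s) (ux · s) (uxx · s) (uxxx · s) x) ((continuousOn_const.mul huxxc).mul
      (continuousOn_fwRhsDerivTwo huc huxc huxxc huxxxc)) Ioo_subset_Ico_self _)

end FornbergWhitham

theorem fw_H2_bound_general (T : ℝ) (M : ℝ)
    (u ux ut uxx uxxx : ℝ → ℝ → ℝ)
    (hu : IsClassicalFWSolution T u ux ut)
    (huxx : ∀ x : ℝ, ∀ t ∈ Set.Ico (0 : ℝ) T,
      HasDerivAt (fun x' => ux x' t) (uxx x t) x)
    (huxxx : ∀ x : ℝ, ∀ t ∈ Set.Ico (0 : ℝ) T,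
      HasDerivAt (fun x' => uxx x' t) (uxxx x t) x)
    (huxxc : ContinuousOn (fun p : ℝ × ℝ => uxx p.1 p.2) (Set.univ ×ˢ Set.Ico 0 T))
    (huxxxc : ContinuousOn (fun p : ℝ × ℝ => uxxx p.1 p.2) (Set.univ ×ˢ Set.Ico 0 T))
    (hlower : ∀ x : ℝ, ∀ t ∈ Set.Ico (0 : ℝ) T, ux x t ≥ -M) :
    ∀ t ∈ Set.Ico (0 : ℝ) T,
      (∫ x in (0:ℝ)..1, (uxx x t) ^ 2)
        ≤ Real.exp ((2 + 15 * M / 2) * t) * ∫ x in (0:ℝ)..1, (uxx x 0) ^ 2 := by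
  intro t ht
  have ⟨_, huper, hux, _⟩ := hu
  have hE_le : ∀ s ∈ Ioo 0 T, ∫ x in (0:ℝ)..1, 2 * uxx x s *
      fwRhsDerivTwo (u · s) (ux · s) (uxx · s) (uxxx · s) x ≤
        15 * M / 2 * ∫ x in (0:ℝ)..1, uxx x s ^ 2 := fun s hs =>
    have hs' := Ioo_subset_Ico_self hs
    integral_deriv_two_mul_fwRhsDerivTwo_le (huper · s hs') (hux · s hs') (huxx · s hs')
      (huxxx · s hs') (continuous_left_of_continuousOn_univ_prod huxxxc hs') (hlower · s hs')
  calc _ ≤ Real.exp (15 * M / 2 * (t - 0)) * ∫ x in (0:ℝ)..1, uxx x 0 ^ 2 :=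
        le_exp_mul_sub_of_hasDerivAt_le
          (continuousOn_intervalIntegral_of_continuousOn zero_le_one
            ((continuousOn_swap_of_continuousOn_univ_prod huxxc subset_rfl _).pow 2))
          (fun _ hs => hu.hasDerivAt_integral_uxx_sq huxx huxxx huxxc huxxxc hs) hE_le ht
    _ ≤ _ := mul_le_mul_of_nonneg_right (Real.exp_le_exp.2 (by linarith [ht.1]))
        (intervalIntegral.integral_nonneg zero_le_one fun _ _ => sq_nonneg _)

/-- H² energy estimate: if a classical periodic Fornberg–Whitham solution has
`∂ₓu ≥ -M` on `ℝ × [0,T)` and enough regularity, then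
`∫_0^1 (∂ₓ²u(x,t))² dx ≤ e^{(2 + 15M/2)t} ∫_0^1 u₀''(x)² dx`. -/
theorem fw_H2_bound (T : ℝ) (hT : 0 < T) (M : ℝ) (hM : 0 ≤ M)
    (u ux ut uxx uxxx utxx : ℝ → ℝ → ℝ)
    (hu : IsClassicalFWSolution T u ux ut)
    (huxx : ∀ x : ℝ, ∀ t ∈ Set.Ico (0 : ℝ) T,
      HasDerivAt (fun x' => ux x' t) (uxx x t) x)
    (huxxx : ∀ x : ℝ, ∀ t ∈ Set.Ico (0 : ℝ) T,
      HasDerivAt (fun x' => uxx x' t) (uxxx x t) x)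
    (hutxx : ∀ x : ℝ, ∀ t ∈ Set.Ico (0 : ℝ) T,
      HasDerivWithinAt (fun t' => uxx x t') (utxx x t) (Set.Ico 0 T) t)
    (huxxc : ContinuousOn (fun p : ℝ × ℝ => uxx p.1 p.2) (Set.univ ×ˢ Set.Ico 0 T))
    (huxxxc : ContinuousOn (fun p : ℝ × ℝ => uxxx p.1 p.2) (Set.univ ×ˢ Set.Ico 0 T))
    (hutxxc : ContinuousOn (fun p : ℝ × ℝ => utxx p.1 p.2) (Set.univ ×ˢ Set.Ico 0 T))
    (hlower : ∀ x : ℝ, ∀ t ∈ Set.Ico (0 : ℝ) T, ux x t ≥ -M) :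
    ∀ t ∈ Set.Ico (0 : ℝ) T,
      (∫ x in (0:ℝ)..1, (uxx x t) ^ 2)
        ≤ Real.exp ((2 + 15 * M / 2) * t) * ∫ x in (0:ℝ)..1, (uxx x 0) ^ 2 :=
  fw_H2_bound_general T M u ux ut uxx uxxx hu huxx huxxx huxxc huxxxc hlower
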